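/- arXiv:1304.5093 — 2 statements merged into one kernel-verified Lean document; each statement's English description precedes it below -/
import Mathlib

section
/- Let Z and Z' be tails of a nodal curve C such that #(Term_Z ∩ Term_{Z'}) = k_Z − 1. Then the pair (Z,Z') is perfect, i.e. one of the following holds: Z ⊆ Z', Z' ⊆ Z, Z^c ⊆ Z', or Z' ⊆ Z^c. -/
/-!
If `(Z, Z')` is not perfect, then `Z` meets both `Z'` and `Z'ᶜ` and neither of them is contained
in `Z`. Since `Z'` and `Z'ᶜ` are connected, each contains an edge of the cut of `Z`; these two
edges are distinct and neither lies in the cut of `Z'`. Hence `Term_Z \ Term_{Z'}` has at least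
two elements, whereas the hypothesis says it has at most one.
-/

open Set

/- Dual multigraph model of a nodal curve: vertices `V` are irreducible
components, edges `E` are nodes, with endpoint maps `s t : E → V`. -/

/-- `Term_Z`: the edges of the cut of `Z`. -/
def TermPts {V E : Type} (s t : E → V) (Z : Set V) : Set E :=
  {e | (s e ∈ Z ∧ t e ∉ Z) ∨ (t e ∈ Z ∧ s e ∉ Z)}

def Subcurve {V : Type} (Z : Set V) : Prop := Z.Nonempty ∧ Z ≠ Set.univ

def ConnOn {V E : Type} (s t : E → V) (Z : Set V) : Prop :=
  ∀ x ∈ Z, ∀ y ∈ Z,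
    Relation.ReflTransGen
      (fun a b => a ∈ Z ∧ b ∈ Z ∧ ∃ e, (s e = a ∧ t e = b) ∨ (s e = b ∧ t e = a)) x y

def IsTail {V E : Type} (s t : E → V) (Z : Set V) : Prop :=
  Subcurve Z ∧ ConnOn s t Z ∧ ConnOn s t Zᶜ

/-- `k_Z = #Term_Z`. -/
noncomputable def kcut {V E : Type} (s t : E → V) (Z : Set V) : ℕ :=
  (TermPts s t Z).ncard

def FreePair {V E : Type} (s t : E → V) (Z Z' : Set V) : Prop :=
  TermPts s t Z ∩ TermPts s t Z' = ∅

def PerfectPair {V : Type} (Z Z' : Set V) : Prop :=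
  Z ⊆ Z' ∨ Z' ⊆ Z ∨ Zᶜ ⊆ Z' ∨ Z' ⊆ Zᶜ

section TermPts

variable {V E : Type} (s t : E → V)

theorem termPts_compl (W : Set V) : TermPts s t Wᶜ = TermPts s t W := by
  ext e
  simp only [TermPts, mem_ofPred_eq, mem_compl_iff, not_not]
  tauto

theorem notMem_termPts_of_mem_of_mem {W : Set V} {e : E} (hs : s e ∈ W) (ht : t e ∈ W) :
    e ∉ TermPts s t W := by
  rintro (⟨-, h⟩ | ⟨-, h⟩) <;> contradiction

theorem exists_mem_termPts_of_connOn {W P : Set V} (hW : ConnOn s t W) {x y : V}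
    (hx : x ∈ W) (hy : y ∈ W) (hxP : x ∈ P) (hyP : y ∉ P) :
    ∃ e ∈ TermPts s t P, s e ∈ W ∧ t e ∈ W := by
  induction hW x hx y hy with
  | refl => exact absurd hxP hyP
  | @tail m z _ hstep ih =>
    obtain ⟨hmW, hzW, e, he⟩ := hstep
    by_cases hmP : m ∈ P
    · refine ⟨e, ?_⟩
      rcases he with ⟨rfl, rfl⟩ | ⟨rfl, rfl⟩
      · exact ⟨Or.inl ⟨hmP, hyP⟩, hmW, hzW⟩
      · exact ⟨Or.inr ⟨hmP, hyP⟩, hzW, hmW⟩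
    · exact ih hmW hmP

theorem one_lt_ncard_termPts_diff_of_not_perfectPair [Finite E] {Z Z' : Set V}
    (hZ' : ConnOn s t Z') (hZ'c : ConnOn s t Z'ᶜ) (h : ¬PerfectPair Z Z') :
    1 < (TermPts s t Z \ TermPts s t Z').ncard := by
  simp only [PerfectPair, not_or, not_subset, mem_compl_iff, not_not] at h
  obtain ⟨⟨b, hbZ, hbZ'⟩, ⟨c, hcZ', hcZ⟩, ⟨d, hdZ, hdZ'⟩, ⟨a, haZ', haZ⟩⟩ := h
  obtain ⟨e₁, he₁Z, he₁s, he₁t⟩ := exists_mem_termPts_of_connOn s t hZ' haZ' hcZ' haZ hcZ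
  obtain ⟨e₂, he₂Z, he₂s, he₂t⟩ := exists_mem_termPts_of_connOn s t hZ'c hbZ' hdZ' hbZ hdZ
  refine (one_lt_ncard_iff).2 ⟨e₁, e₂, ⟨he₁Z, notMem_termPts_of_mem_of_mem s t he₁s he₁t⟩,
    ⟨he₂Z, termPts_compl s t Z' ▸ notMem_termPts_of_mem_of_mem s t he₂s he₂t⟩, ?_⟩
  rintro rfl
  exact he₂s he₁s

end TermPts

theorem stmt_7_general {V E : Type} [Fintype E] (s t : E → V)
    (Z Z' : Set V)
    (hZ' : IsTail s t Z')
    (h : (TermPts s t Z ∩ TermPts s t Z').ncard = kcut s t Z - 1) :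
    PerfectPair Z Z' := by
  by_contra hZZ'
  have hdiff := one_lt_ncard_termPts_diff_of_not_perfectPair s t hZ'.2.1 hZ'.2.2 hZZ'
  have hsplit := ncard_inter_add_ncard_sdiff_eq_ncard (TermPts s t Z) (TermPts s t Z')
  rw [← kcut] at hsplit
  omega

/-- Lemma 3.4 (ii): if `Z, Z'` are tails and `#(Term_Z ∩ Term_{Z'}) = k_Z - 1`,
then the pair `(Z, Z')` is perfect. -/
theorem stmt_7 {V E : Type} [Fintype V] [Fintype E] (s t : E → V)
    (hC : ConnOn s t Set.univ) (Z Z' : Set V)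
    (hZ : IsTail s t Z) (hZ' : IsTail s t Z')
    (h : (TermPts s t Z ∩ TermPts s t Z').ncard = kcut s t Z - 1) :
    PerfectPair Z Z' :=
  stmt_7_general s t Z Z' hZ' h
end

section
/- The set S²_{i,j} of 2-tails Z of a nodal curve C with C_i ∪ C_j ⊆ Z and C_1 ⊆ Z^c is closed under intersection: if Z, Z' ∈ S²_{i,j}, then Z ∧ Z' ∈ S²_{i,j}. -/
open Set

/-- `S²_{i,j}`: the 2-tails containing `vi, vj` and omitting `v1`. -/
def S2set {V E : Type} (s t : E → V) (v1 vi vj : V) : Set (Set V) :=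
  {Z | IsTail s t Z ∧ kcut s t Z = 2 ∧ vi ∈ Z ∧ vj ∈ Z ∧ v1 ∉ Z}

/-- The levels of the inductive construction of the set of nested tails:
level `0` is `S` itself, and level `m+1` consists of the members `Z` of `S`
with `W_m ◁ Z`, where `W_m` is the intersection of the members of level `m`. -/
def Tlevel {V E : Type} (s t : E → V) (S : Set (Set V)) : ℕ → Set (Set V)
  | 0 => S
  | (m + 1) =>
      {Z | Z ∈ S ∧ ⋂₀ Tlevel s t S m ⊂ Z ∧ FreePair s t (⋂₀ Tlevel s t S m) Z}

/-- The set of nested tails extracted from `S`: the tails `W_m = ⋂ (level m)`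
for all `m` with level `m` nonempty. -/
def Tset {V E : Type} (s t : E → V) (S : Set (Set V)) : Set (Set V) :=
  {X | ∃ m, (Tlevel s t S m).Nonempty ∧ X = ⋂₀ Tlevel s t S m}

/-- `T²_{i,j}`, the set of nested 2-tails with respect to `(i, j)`. -/
def T2set {V E : Type} (s t : E → V) (v1 vi vj : V) : Set (Set V) :=
  Tset s t (S2set s t v1 vi vj)

/-- `S³_{i,j}`: the `T²_{i,j}`-free 3-tails containing `vi, vj`, omitting `v1`. -/
def S3set {V E : Type} (s t : E → V) (v1 vi vj : V) : Set (Set V) :=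
  {Z | IsTail s t Z ∧ kcut s t Z = 3 ∧ vi ∈ Z ∧ vj ∈ Z ∧ v1 ∉ Z ∧
        ∀ W ∈ T2set s t v1 vi vj, FreePair s t Z W}

/-- `T³_{i,j}`, the set of nested 3-tails with respect to `(i, j)`. -/
def T3set {V E : Type} (s t : E → V) (v1 vi vj : V) : Set (Set V) :=
  Tset s t (S3set s t v1 vi vj)

/-! Write `A = Z ∩ Z'`, `B = Z \ Z'`, `C = Z' \ Z` and `D = (Z ∪ Z')ᶜ ∋ v₁`; the case
`B = ∅` or `C = ∅` is trivial. Otherwise connectivity of `Z`, `Z'`, `Zᶜ`, `Z'ᶜ` gives edges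
`A–B`, `A–C`, `B–D`, `C–D`. As `Z` and `Z'` have only two terminal points each, these are all of
them, so the terminal points of `A` are exactly one `A–B` and one `A–C` edge. Since `A` and `B`
are joined by a single edge, `A` stays connected inside the connected `Z`, and `Aᶜ = Zᶜ ∪ Z'ᶜ` is
connected through `v₁`. -/

open Relation

variable {V E : Type} (s t : E → V)

def Links (e : E) (a b : V) : Prop :=
  (s e = a ∧ t e = b) ∨ (s e = b ∧ t e = a)

/-- `ConnOn s t W` unfolds to `ReflTransGen (AdjIn s t W)` relating any two points of `W`. -/
def AdjIn (W : Set V) (a b : V) : Prop :=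
  a ∈ W ∧ b ∈ W ∧ ∃ e, Links s t e a b

variable {s t}

instance AdjIn.instSymm (W : Set V) : Std.Symm (AdjIn s t W) :=
  ⟨fun _ _ ⟨ha, hb, e, he⟩ => ⟨hb, ha, e, he.symm⟩⟩

theorem AdjIn.mono {W W' : Set V} (h : W ⊆ W') : AdjIn s t W ≤ AdjIn s t W' :=
  fun _ _ ⟨ha, hb, he⟩ => ⟨h ha, h hb, he⟩

theorem mem_termPts_of_links {X : Set V} {e : E} {a b : V} (he : Links s t e a b)
    (ha : a ∈ X) (hb : b ∉ X) : e ∈ TermPts s t X := by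
  rcases he with ⟨rfl, rfl⟩ | ⟨rfl, rfl⟩
  exacts [Or.inl ⟨ha, hb⟩, Or.inr ⟨ha, hb⟩]

theorem not_mem_termPts_of_mem {X : Set V} {e : E} (hs : s e ∈ X) (ht : t e ∈ X) :
    e ∉ TermPts s t X := by
  rintro (⟨-, h⟩ | ⟨-, h⟩) <;> contradiction

theorem not_mem_termPts_of_not_mem {X : Set V} {e : E} (hs : s e ∉ X) (ht : t e ∉ X) :
    e ∉ TermPts s t X := by
  rintro (⟨h, -⟩ | ⟨h, -⟩) <;> contradiction

theorem mem_termPts_inter_iff {W P : Set V} {e : E} (hs : s e ∈ W) (ht : t e ∈ W) :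
    e ∈ TermPts s t (W ∩ P) ↔ e ∈ TermPts s t P := by
  simp only [TermPts, mem_ofPred_eq, mem_inter_iff]
  tauto

theorem termPts_inter_subset (Z Z' : Set V) :
    TermPts s t (Z ∩ Z') ⊆ TermPts s t Z ∪ TermPts s t Z' := by
  intro e
  simp only [TermPts, mem_ofPred_eq, mem_inter_iff, mem_union]
  tauto

theorem ConnOn.union {W W' : Set V} {v : V} (hW : ConnOn s t W) (hW' : ConnOn s t W')
    (hv : v ∈ W) (hv' : v ∈ W') : ConnOn s t (W ∪ W') := by
  have to_v : ∀ x ∈ W ∪ W', ReflTransGen (AdjIn s t (W ∪ W')) x v := by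
    rintro x (hx | hx)
    · exact ReflTransGen.mono (AdjIn.mono subset_union_left) _ _ (hW x hx v hv)
    · exact ReflTransGen.mono (AdjIn.mono subset_union_right) _ _ (hW' x hx v hv')
  exact fun x hx y hy => (to_v x hx).trans (Std.Symm.symm _ _ (to_v y hy))

theorem exists_mem_termPts_of_reflTransGen {W P : Set V} {x y : V}
    (hxy : ReflTransGen (AdjIn s t W) x y) (hx : x ∈ P) (hy : y ∉ P) :
    ∃ e ∈ TermPts s t P, s e ∈ W ∧ t e ∈ W := by
  induction hxy with
  | refl => contradiction
  | @tail b c _ hbc ih =>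
    by_cases hb : b ∈ P
    · obtain ⟨hbW, hcW, e, he⟩ := hbc
      refine ⟨e, mem_termPts_of_links he hb hy, ?_⟩
      rcases he with ⟨rfl, rfl⟩ | ⟨rfl, rfl⟩
      exacts [⟨hbW, hcW⟩, ⟨hcW, hbW⟩]
    · exact ih hb

theorem ConnOn.exists_mem_termPts {W P : Set V} (hW : ConnOn s t W) {x y : V}
    (hx : x ∈ W) (hxP : x ∈ P) (hy : y ∈ W) (hyP : y ∉ P) :
    ∃ e ∈ TermPts s t P, s e ∈ W ∧ t e ∈ W :=
  exists_mem_termPts_of_reflTransGen (hW x hx y hy) hxP hyP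

theorem Links.eq_of_ne {e : E} {a b a' b' : V} (he : Links s t e a b)
    (he' : Links s t e a' b') (hab' : a ≠ b') : a = a' := by
  rcases he with ⟨rfl, rfl⟩ | ⟨rfl, rfl⟩ <;> rcases he' with ⟨h, h'⟩ | ⟨h, h'⟩
  exacts [h, (hab' h).elim, (hab' h').elim, h']

/-- A walk inside `W` that leaves `X` must return through the unique edge joining `X` to the
rest of `W`, at the very vertex where it left; cutting out the excursion keeps it inside `X`. -/
theorem ConnOn.of_subset {W X : Set V} (hW : ConnOn s t W) (hXW : X ⊆ W)
    (hcut : {e ∈ TermPts s t X | s e ∈ W ∧ t e ∈ W}.Subsingleton) : ConnOn s t X := by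
  intro x hx y hy
  suffices key : ∀ y, ReflTransGen (AdjIn s t W) x y →
      (y ∈ X → ReflTransGen (AdjIn s t X) x y) ∧
      (y ∉ X → ∃ e a b, Links s t e a b ∧ a ∈ X ∧ b ∈ W \ X ∧ ReflTransGen (AdjIn s t X) x a) from
    (key y (hW x (hXW hx) y (hXW hy))).1 hy
  have mem_cut {e a b} (he : Links s t e a b) (ha : a ∈ X) (hb : b ∈ W \ X) :
      e ∈ {e ∈ TermPts s t X | s e ∈ W ∧ t e ∈ W} := by
    refine ⟨mem_termPts_of_links he ha hb.2, ?_⟩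
    rcases he with ⟨rfl, rfl⟩ | ⟨rfl, rfl⟩
    exacts [⟨hXW ha, hb.1⟩, ⟨hb.1, hXW ha⟩]
  intro y hxy
  induction hxy with
  | refl => exact ⟨fun _ => .refl, fun h => absurd hx h⟩
  | @tail b c _ hbc ih =>
    obtain ⟨hbW, hcW, e, he⟩ := hbc
    by_cases hb : b ∈ X <;> by_cases hc : c ∈ X
    · exact ⟨fun _ => (ih.1 hb).tail ⟨hb, hc, e, he⟩, fun h => absurd hc h⟩
    · exact ⟨fun h => absurd h hc, fun _ => ⟨e, b, c, he, hb, ⟨hcW, hc⟩, ih.1 hb⟩⟩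
    · obtain ⟨e', a, d, he', ha, hd, hxa⟩ := ih.2 hb
      have hee' : e = e' := hcut (mem_cut he.symm hc ⟨hbW, hb⟩) (mem_cut he' ha hd)
      subst hee'
      have hac : a = c := he'.eq_of_ne he.symm (fun h => hb (h ▸ ha))
      exact ⟨fun _ => hac ▸ hxa, fun h => absurd hc h⟩
    · exact ⟨fun h => absurd h hc, fun _ => ih.2 hb⟩

theorem eq_pair_of_ncard_eq_two {α : Type*} {S : Set α} {a b : α} (hS : S.ncard = 2)
    (ha : a ∈ S) (hb : b ∈ S) (hab : a ≠ b) : S = {a, b} :=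
  (eq_of_subset_of_ncard_le (pair_subset ha hb) (by rw [hS, ncard_pair hab])
    (finite_of_ncard_pos (by omega))).symm

theorem IsTail.kcut_inter_eq_two_and_connOn {Z Z' : Set V} {v w b c : V}
    (hZ : IsTail s t Z) (hZ' : IsTail s t Z') (hk : kcut s t Z = 2) (hk' : kcut s t Z' = 2)
    (hv : v ∈ Z ∩ Z') (hw : w ∉ Z ∪ Z') (hb : b ∈ Z \ Z') (hc : c ∈ Z' \ Z) :
    kcut s t (Z ∩ Z') = 2 ∧ ConnOn s t (Z ∩ Z') := by
  obtain ⟨-, hZc, hZcc⟩ := hZ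
  obtain ⟨-, hZ'c, hZ'cc⟩ := hZ'
  obtain ⟨f₁, hf₁, hsf₁, htf₁⟩ := hZc.exists_mem_termPts hv.1 hv.2 hb.1 hb.2
  obtain ⟨f₂, hf₂, hsf₂, htf₂⟩ := hZ'c.exists_mem_termPts hv.2 hv.1 hc.1 hc.2
  obtain ⟨g₁, hg₁, hsg₁, htg₁⟩ :=
    hZ'cc.exists_mem_termPts (mem_compl hb.2) hb.1 (fun h => hw (.inr h)) (fun h => hw (.inl h))
  obtain ⟨g₂, hg₂, hsg₂, htg₂⟩ :=
    hZcc.exists_mem_termPts (mem_compl hc.2) hc.1 (fun h => hw (.inl h)) (fun h => hw (.inr h))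
  have hf₁Z : f₁ ∉ TermPts s t Z := not_mem_termPts_of_mem hsf₁ htf₁
  have hf₁A : f₁ ∈ TermPts s t (Z ∩ Z') := (mem_termPts_inter_iff hsf₁ htf₁).2 hf₁
  have hf₂A : f₂ ∈ TermPts s t (Z ∩ Z') :=
    inter_comm Z' Z ▸ (mem_termPts_inter_iff hsf₂ htf₂).2 hf₂
  have hg₁A : g₁ ∉ TermPts s t (Z ∩ Z') :=
    not_mem_termPts_of_not_mem (fun h => hsg₁ h.2) (fun h => htg₁ h.2)
  have hg₂A : g₂ ∉ TermPts s t (Z ∩ Z') :=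
    not_mem_termPts_of_not_mem (fun h => hsg₂ h.1) (fun h => htg₂ h.1)
  have hcutZ : TermPts s t Z = {f₂, g₁} :=
    eq_pair_of_ncard_eq_two hk hf₂ hg₁ (ne_of_mem_of_not_mem hf₂A hg₁A)
  have hcutZ' : TermPts s t Z' = {f₁, g₂} :=
    eq_pair_of_ncard_eq_two hk' hf₁ hg₂ (ne_of_mem_of_not_mem hf₁A hg₂A)
  have hcut : TermPts s t (Z ∩ Z') = {f₁, f₂} := by
    refine (pair_subset hf₁A hf₂A).antisymm' fun e he => ?_
    rcases termPts_inter_subset Z Z' he with heZ | heZ'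
    · rw [hcutZ] at heZ
      rcases heZ with rfl | rfl
      exacts [.inr rfl, absurd he hg₁A]
    · rw [hcutZ'] at heZ'
      rcases heZ' with rfl | rfl
      exacts [.inl rfl, absurd he hg₂A]
  refine ⟨by rw [kcut, hcut, ncard_pair (ne_of_mem_of_not_mem hf₂ hf₁Z).symm], ?_⟩
  refine hZc.of_subset inter_subset_left (subsingleton_of_subset_singleton (a := f₁) ?_)
  rintro e ⟨he, hse, hte⟩
  rw [hcut] at he
  rcases he with rfl | rfl
  exacts [rfl, absurd hf₂ (not_mem_termPts_of_mem hse hte)]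

theorem IsTail.inter {Z Z' : Set V} {v w : V} (hZ : IsTail s t Z) (hZ' : IsTail s t Z')
    (hA : ConnOn s t (Z ∩ Z')) (hv : v ∈ Z ∩ Z') (hw : w ∉ Z ∪ Z') : IsTail s t (Z ∩ Z') := by
  refine ⟨⟨⟨v, hv⟩, fun h => hw (.inl (h ▸ mem_univ w).1)⟩, hA, ?_⟩
  rw [compl_inter]
  exact hZ.2.2.union hZ'.2.2 (fun h => hw (.inl h)) (fun h => hw (.inr h))

theorem IsTail.inter_of_kcut_eq_two {Z Z' : Set V} {v w : V} (hZ : IsTail s t Z)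
    (hZ' : IsTail s t Z') (hk : kcut s t Z = 2) (hk' : kcut s t Z' = 2)
    (hv : v ∈ Z ∩ Z') (hw : w ∉ Z ∪ Z') : IsTail s t (Z ∩ Z') ∧ kcut s t (Z ∩ Z') = 2 := by
  by_cases hZZ' : Z ⊆ Z'
  · rw [inter_eq_left.2 hZZ']; exact ⟨hZ, hk⟩
  by_cases hZ'Z : Z' ⊆ Z
  · rw [inter_eq_right.2 hZ'Z]; exact ⟨hZ', hk'⟩
  obtain ⟨b, hb⟩ := not_subset.1 hZZ'
  obtain ⟨c, hc⟩ := not_subset.1 hZ'Z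
  obtain ⟨hkA, hA⟩ := hZ.kcut_inter_eq_two_and_connOn hZ' hk hk' hv hw hb hc
  exact ⟨hZ.inter hZ' hA hv hw, hkA⟩

theorem stmt_13_general {V E : Type} (s t : E → V)
    (v1 vi vj : V) (Z Z' : Set V)
    (hZ : Z ∈ S2set s t v1 vi vj) (hZ' : Z' ∈ S2set s t v1 vi vj) :
    Z ∩ Z' ∈ S2set s t v1 vi vj := by
  obtain ⟨hZt, hk, hvi, hvj, hv1⟩ := hZ
  obtain ⟨hZt', hk', hvi', hvj', hv1'⟩ := hZ'
  obtain ⟨hA, hkA⟩ :=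
    hZt.inter_of_kcut_eq_two hZt' hk hk' ⟨hvi, hvi'⟩ (by rintro (h | h) <;> contradiction)
  exact ⟨hA, hkA, ⟨hvi, hvi'⟩, ⟨hvj, hvj'⟩, fun h => hv1 h.1⟩

/-- The set `S²_{i,j}` of 2-tails containing `v_i, v_j` and omitting `v_1` is
closed under intersection. -/
theorem stmt_13 {V E : Type} [Fintype V] [Fintype E] (s t : E → V)
    (hC : ConnOn s t Set.univ) (v1 vi vj : V) (Z Z' : Set V)
    (hZ : Z ∈ S2set s t v1 vi vj) (hZ' : Z' ∈ S2set s t v1 vi vj) :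
    Z ∩ Z' ∈ S2set s t v1 vi vj :=
  stmt_13_general s t v1 vi vj Z Z' hZ hZ'
end
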